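/- arXiv:math/0010107 — 3 statements merged into one kernel-verified Lean document; each statement's English description precedes it below -/
import Mathlib

section
/- Let a, b, c ∈ R = ℂ[s,t] be homogeneous polynomials of degree n ≥ 1 with gcd(a,b,c) = 1. Then the ℂ-linear map R_{n−1}³ → R_{2n−1} sending (A,B,C) to A·a + B·b + C·c is surjective; equivalently, its kernel Syz(a,b,c)_{n−1} has ℂ-dimension exactly n. -/
/-!
For generic `l`, the forms `a` and `b + l • c` are coprime: each prime factor of `a` that
divides `b + l • c` for two different values of `l` divides both `b` and `c`, so it excludes at
most one `l`. For coprime forms `u`, `v` of degree `n`, the map `(A, B) ↦ A u + B v` from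
`R_{n-1}²` to `R_{2n-1}` is injective, because `v ∣ A` forces `A = 0` by degree, and both spaces
have dimension `2n`; hence it is onto. So `(A, B, C) ↦ A a + B b + C c` is onto `R_{2n-1}`, and
rank–nullity gives the dimension `3n - 2n = n` of its kernel.
-/

open MvPolynomial

/-- The degree-`d` graded piece of the syzygy module `Syz(a,b,c) ⊆ R³`, `R = ℂ[s,t]`,
as a `ℂ`-subspace of `R³`: triples of homogeneous polynomials of degree `d` with
`A·a + B·b + C·c = 0`. -/
noncomputable def syzygyGraded (a b c : MvPolynomial (Fin 2) ℂ) (d : ℕ) :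
    Submodule ℂ (Fin 3 → MvPolynomial (Fin 2) ℂ) where
  carrier := {A | (∀ i, A i ∈ homogeneousSubmodule (Fin 2) ℂ d) ∧
    A 0 * a + A 1 * b + A 2 * c = 0}
  add_mem' := by
    rintro A B ⟨hA1, hA2⟩ ⟨hB1, hB2⟩
    refine ⟨fun i => Submodule.add_mem _ (hA1 i) (hB1 i), ?_⟩
    simp only [Pi.add_apply]
    linear_combination hA2 + hB2
  zero_mem' := by
    exact ⟨fun i => Submodule.zero_mem _, by simp⟩
  smul_mem' := by
    rintro r A ⟨hA1, hA2⟩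
    refine ⟨fun i => Submodule.smul_mem _ r (hA1 i), ?_⟩
    simp only [Pi.smul_apply, MvPolynomial.smul_eq_C_mul]
    linear_combination (MvPolynomial.C r) * hA2

open Module UniqueFactorizationMonoid

theorem subsingleton_setOf_dvd_add_smul {K R : Type*} [Field K] [CommRing R] [Algebra K R]
    {p v w : R} (hvw : ¬(p ∣ v ∧ p ∣ w)) : {l : K | p ∣ v + l • w}.Subsingleton := by
  intro l₁ h₁ l₂ h₂
  by_contra hne
  have hw : p ∣ w := by
    have h := dvd_sub h₁ h₂
    rw [add_sub_add_left_eq_sub, ← sub_smul, Algebra.smul_def] at h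
    exact ((sub_ne_zero.2 hne).isUnit.map (algebraMap K R)).dvd_mul_left.1 h
  have hlw : p ∣ l₁ • w := by
    rw [Algebra.smul_def]
    exact hw.mul_left _
  exact hvw ⟨(dvd_add_left hlw).1 h₁, hw⟩

theorem exists_isRelPrime_add_smul {K R : Type*} [Field K] [Infinite K] [CommRing R] [IsDomain R]
    [UniqueFactorizationMonoid R] [Algebra K R] {u v w : R} (hu : u ≠ 0)
    (h : ∀ g, g ∣ u → g ∣ v → g ∣ w → IsUnit g) : ∃ l : K, IsRelPrime u (v + l • w) := by
  classical
  have hfin : (⋃ p ∈ (factors u).toFinset, {l : K | p ∣ v + l • w}).Finite := by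
    refine (factors u).toFinset.finite_toSet.biUnion fun p hp => ?_
    rw [Finset.mem_coe, Multiset.mem_toFinset] at hp
    exact (subsingleton_setOf_dvd_add_smul fun hpvw => (prime_of_factor p hp).not_isUnit
      (h p (dvd_of_mem_factors hp) hpvw.1 hpvw.2)).finite
  obtain ⟨l, hl⟩ := hfin.infinite_compl.nonempty
  refine ⟨l, (isRelPrime_iff_no_prime_factors hu).2 fun d hdu hdv hd => hl ?_⟩
  obtain ⟨q, hq, hdq⟩ := exists_mem_factors_of_dvd hu hd.irreducible hdu
  exact Set.mem_biUnion (Multiset.mem_toFinset.2 hq) (hdq.dvd_iff_dvd_left.1 hdv)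

namespace MvPolynomial

variable {σ R K : Type*}

theorem finrank_homogeneousSubmodule [Fintype σ] [Field K] (n : ℕ) :
    finrank K (homogeneousSubmodule σ K n) = (Fintype.card σ + n - 1).choose n := by
  classical
  have hset : {d : σ →₀ ℕ | d.degree = n} =
      ((Finset.univ : Finset σ).finsuppAntidiag n : Set (σ →₀ ℕ)) := by
    ext d
    simp [Finset.mem_finsuppAntidiag, Finsupp.degree_eq_sum]
  rw [homogeneousSubmodule_eq_finsupp_supported, hset,
    (AddMonoidAlgebra.supportedEquivFinsupp _).finrank_eq, finrank_finsupp_self]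
  simp [Finset.card_finsuppAntidiag_nat_eq_choose]

theorem finrank_homogeneousSubmodule_fin_two [Field K] (n : ℕ) :
    finrank K (homogeneousSubmodule (Fin 2) K n) = n + 1 := by
  rw [finrank_homogeneousSubmodule, Fintype.card_fin, add_comm]
  exact Nat.choose_succ_self_right n

instance [Finite σ] [CommSemiring R] (n : ℕ) : Module.Finite R (homogeneousSubmodule σ R n) :=
  Module.Finite.iff_fg.2 (homogeneousSubmodule_fg σ R n)

theorem IsHomogeneous.eq_zero_of_dvd_of_lt [CommRing R] [IsDomain R] {p q : MvPolynomial σ R}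
    {m n : ℕ} (hp : p.IsHomogeneous n) (hp0 : p ≠ 0) (hq : q.IsHomogeneous m) (hmn : m < n)
    (hpq : p ∣ q) : q = 0 := by
  by_contra hq0
  have hdeg := totalDegree_le_of_dvd_of_isDomain hpq hq0
  rw [hp.totalDegree hp0, hq.totalDegree hq0] at hdeg
  omega

theorem IsHomogeneous.not_isUnit [CommRing R] [IsDomain R] {p : MvPolynomial σ R} {n : ℕ}
    (hp : p.IsHomogeneous n) (hn : n ≠ 0) : ¬IsUnit p := fun hu =>
  one_ne_zero <| hp.eq_zero_of_dvd_of_lt hu.ne_zero (isHomogeneous_one σ R)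
    (Nat.pos_of_ne_zero hn) hu.dvd

theorem eq_zero_of_mul_add_mul_eq_zero [Field K] {q : ℕ} {u v A B : MvPolynomial σ K}
    (hv : v.IsHomogeneous (q + 1)) (hv0 : v ≠ 0) (huv : IsRelPrime u v)
    (hA : A.IsHomogeneous q) (h : A * u + B * v = 0) : A = 0 ∧ B = 0 := by
  have hvA : v ∣ A := huv.symm.dvd_of_dvd_mul_right ⟨-B, by linear_combination h⟩
  obtain rfl : A = 0 := hv.eq_zero_of_dvd_of_lt hv0 hA q.lt_succ_self hvA
  exact ⟨rfl, (mul_eq_zero.1 (by simpa using h)).resolve_right hv0⟩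

theorem exists_mul_add_mul_eq_of_isRelPrime [Field K] {p q : ℕ} {u v f : MvPolynomial (Fin 2) K}
    (hu : u.IsHomogeneous (p + 1)) (hv : v.IsHomogeneous (q + 1)) (huv : IsRelPrime u v)
    (hf : f.IsHomogeneous (p + q + 1)) :
    ∃ A B, A.IsHomogeneous q ∧ B.IsHomogeneous p ∧ A * u + B * v = f := by
  let Φ := (LinearMap.mulRight K u ∘ₗ (homogeneousSubmodule (Fin 2) K q).subtype).coprod
    (LinearMap.mulRight K v ∘ₗ (homogeneousSubmodule (Fin 2) K p).subtype)
  have hv0 : v ≠ 0 := by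
    rintro rfl
    exact hu.not_isUnit p.succ_ne_zero (isRelPrime_zero_right.1 huv)
  have hΦ : Function.Injective Φ := by
    refine (injective_iff_map_eq_zero Φ).2 fun ⟨A, B⟩ h => ?_
    obtain ⟨hA, hB⟩ := eq_zero_of_mul_add_mul_eq_zero hv hv0 huv A.2 h
    exact Prod.ext (Subtype.ext hA) (Subtype.ext hB)
  have hrange : LinearMap.range Φ = homogeneousSubmodule (Fin 2) K (p + q + 1) := by
    refine Submodule.eq_of_le_of_finrank_eq ?_ ?_
    · rintro _ ⟨⟨A, B⟩, rfl⟩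
      show (A : MvPolynomial (Fin 2) K) * u + B * v ∈ _
      refine add_mem ?_ ?_
      · rw [show p + q + 1 = q + (p + 1) by omega]
        exact A.2.mul hu
      · rw [show p + q + 1 = p + (q + 1) by omega]
        exact B.2.mul hv
    · rw [LinearMap.finrank_range_of_inj hΦ, finrank_prod, finrank_homogeneousSubmodule_fin_two,
        finrank_homogeneousSubmodule_fin_two, finrank_homogeneousSubmodule_fin_two]
      omega
  obtain ⟨⟨A, B⟩, hAB⟩ : f ∈ LinearMap.range Φ := hrange ▸ hf
  exact ⟨A, B, A.2, B.2, hAB⟩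

theorem exists_mul_add_mul_add_mul_eq [Field K] [Infinite K] {m : ℕ}
    {a b c f : MvPolynomial (Fin 2) K} (ha : a.IsHomogeneous (m + 1))
    (hb : b.IsHomogeneous (m + 1)) (hc : c.IsHomogeneous (m + 1))
    (hgcd : ∀ g, g ∣ a → g ∣ b → g ∣ c → IsUnit g) (hf : f.IsHomogeneous (m + m + 1)) :
    ∃ A B C, A.IsHomogeneous m ∧ B.IsHomogeneous m ∧ C.IsHomogeneous m ∧
      A * a + B * b + C * c = f := by
  by_cases ha0 : a = 0
  · subst ha0
    obtain ⟨B, C, hB, hC, hBC⟩ := exists_mul_add_mul_eq_of_isRelPrime hb hc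
      (fun g hgb hgc => hgcd g (dvd_zero g) hgb hgc) hf
    exact ⟨0, B, C, isHomogeneous_zero _ _ _, hB, hC, by simpa using hBC⟩
  · obtain ⟨l, hl⟩ := exists_isRelPrime_add_smul (K := K) ha0 hgcd
    have hbc : (b + l • c).IsHomogeneous (m + 1) :=
      hb.add ((homogeneousSubmodule (Fin 2) K (m + 1)).smul_mem l hc)
    obtain ⟨A, B, hA, hB, hAB⟩ := exists_mul_add_mul_eq_of_isRelPrime ha hbc hl hf
    refine ⟨A, B, l • B, hA, hB, (homogeneousSubmodule (Fin 2) K m).smul_mem l hB, ?_⟩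
    rw [← hAB, smul_mul_assoc, mul_add, mul_smul_comm, add_assoc]

noncomputable def movingLineMap [CommSemiring R] (a b c : MvPolynomial σ R) (m : ℕ) :
    (Fin 3 → homogeneousSubmodule σ R m) →ₗ[R] MvPolynomial σ R where
  toFun A := A 0 * a + A 1 * b + A 2 * c
  map_add' A B := by
    simp only [Pi.add_apply, Submodule.coe_add]
    ring
  map_smul' r A := by
    simp only [Pi.smul_apply, Submodule.coe_smul, smul_mul_assoc, RingHom.id_apply, smul_add]

theorem range_movingLineMap [Field K] [Infinite K] {m : ℕ} {a b c : MvPolynomial (Fin 2) K}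
    (ha : a.IsHomogeneous (m + 1)) (hb : b.IsHomogeneous (m + 1))
    (hc : c.IsHomogeneous (m + 1)) (hgcd : ∀ g, g ∣ a → g ∣ b → g ∣ c → IsUnit g) :
    LinearMap.range (movingLineMap a b c m) = homogeneousSubmodule (Fin 2) K (m + m + 1) := by
  apply le_antisymm
  · rintro _ ⟨A, rfl⟩
    exact (((A 0).2.mul ha).add ((A 1).2.mul hb)).add ((A 2).2.mul hc)
  · intro f hf
    obtain ⟨A, B, C, hA, hB, hC, hABC⟩ := exists_mul_add_mul_add_mul_eq ha hb hc hgcd hf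
    exact ⟨![⟨A, hA⟩, ⟨B, hB⟩, ⟨C, hC⟩], hABC⟩

end MvPolynomial

noncomputable def syzygyGradedEquivKer (a b c : MvPolynomial (Fin 2) ℂ) (m : ℕ) :
    syzygyGraded a b c m ≃ₗ[ℂ] LinearMap.ker (movingLineMap a b c m) where
  toFun A := ⟨fun i => ⟨A.1 i, A.2.1 i⟩, A.2.2⟩
  invFun A := ⟨fun i => A.1 i, fun i => (A.1 i).2, A.2⟩
  left_inv _ := rfl
  right_inv _ := rfl
  map_add' _ _ := rfl
  map_smul' _ _ := rfl

theorem finrank_syzygyGraded {m : ℕ} {a b c : MvPolynomial (Fin 2) ℂ}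
    (ha : a.IsHomogeneous (m + 1)) (hb : b.IsHomogeneous (m + 1))
    (hc : c.IsHomogeneous (m + 1)) (hgcd : ∀ g, g ∣ a → g ∣ b → g ∣ c → IsUnit g) :
    finrank ℂ (syzygyGraded a b c m) = m + 1 := by
  have h := (movingLineMap a b c m).finrank_range_add_finrank_ker
  rw [range_movingLineMap ha hb hc hgcd, finrank_pi_fintype] at h
  simp only [finrank_homogeneousSubmodule_fin_two, Finset.sum_const, Finset.card_univ,
    Fintype.card_fin, smul_eq_mul] at h
  rw [(syzygyGradedEquivKer a b c m).finrank_eq]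
  omega

/-- For homogeneous `a,b,c` of degree `n ≥ 1` with `gcd(a,b,c)=1`,
the map `R_{n−1}³ → R_{2n−1}`, `(A,B,C) ↦ Aa+Bb+Cc`, is surjective; equivalently, its
kernel `Syz(a,b,c)_{n−1}` has `ℂ`-dimension exactly `n`. -/
theorem moving_line_map_surjective_and_kernel_dim (n : ℕ) (hn : 1 ≤ n)
    (a b c : MvPolynomial (Fin 2) ℂ)
    (ha : a.IsHomogeneous n) (hb : b.IsHomogeneous n) (hc : c.IsHomogeneous n)
    (hgcd : ∀ g : MvPolynomial (Fin 2) ℂ, g ∣ a → g ∣ b → g ∣ c → IsUnit g) :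
    (∀ f : MvPolynomial (Fin 2) ℂ, f.IsHomogeneous (2 * n - 1) →
      ∃ A B C : MvPolynomial (Fin 2) ℂ, A.IsHomogeneous (n - 1) ∧
        B.IsHomogeneous (n - 1) ∧ C.IsHomogeneous (n - 1) ∧
        A * a + B * b + C * c = f) ∧
    Module.finrank ℂ (syzygyGraded a b c (n - 1)) = n := by
  obtain ⟨m, rfl⟩ : ∃ m, n = m + 1 := ⟨n - 1, by omega⟩
  rw [show 2 * (m + 1) - 1 = m + m + 1 by omega, Nat.add_sub_cancel]
  exact ⟨fun f hf => exists_mul_add_mul_add_mul_eq ha hb hc hgcd hf,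
    finrank_syzygyGraded ha hb hc hgcd⟩
end

section
/- Let a, b, c ∈ R = ℂ[s,u,t,v] be bihomogeneous of bidegree (m,n) with m,n ≥ 1, and suppose a, b, c have no common zeros on ℙ¹×ℙ¹, i.e., there is no point (s₀,u₀,t₀,v₀) ∈ ℂ⁴ with (s₀,u₀) ≠ (0,0) and (t₀,v₀) ≠ (0,0) at which a, b, c all vanish. Then every syzygy on a, b, c of bidegree (2m−1,2n−1) is a Koszul syzygy: if A, B, C ∈ R are bihomogeneous of bidegree (2m−1,2n−1) and A·a + B·b + C·c = 0, then there exist h₁, h₂, h₃ ∈ R bihomogeneous of bidegree (m−1,n−1) such that A = h₁c + h₂b, B = −h₂a + h₃c, and C = −h₁a − h₃b. -/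
open MvPolynomial

/-- In `R = ℂ[s,u,t,v]` (variables `0 = s`, `1 = u`, `2 = t`, `3 = v`), a polynomial
is bihomogeneous of bidegree `(m,n)` if every monomial in its support has degree `m`
in `s,u` and degree `n` in `t,v`. -/
def IsBihomogeneous (f : MvPolynomial (Fin 4) ℂ) (m n : ℕ) : Prop :=
  ∀ d ∈ f.support, d 0 + d 1 = m ∧ d 2 + d 3 = n

namespace KoszulAux

abbrev MvP := MvPolynomial (Fin 4) ℂ

lemma bihom_cast {f : MvP} {m n m' n' : ℕ} (h : IsBihomogeneous f m n)
    (hm : m = m') (hn : n = n') : IsBihomogeneous f m' n' := hm ▸ hn ▸ h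

lemma bihom_zero (m n : ℕ) : IsBihomogeneous (0 : MvP) m n := by
  intro d hd; simp at hd

lemma bihom_add {f g : MvP} {m n : ℕ} (hf : IsBihomogeneous f m n)
    (hg : IsBihomogeneous g m n) : IsBihomogeneous (f + g) m n := by
  intro d hd
  have := MvPolynomial.support_add (p := f) (q := g) hd
  rcases Finset.mem_union.mp this with h | h
  exacts [hf d h, hg d h]

lemma bihom_neg {f : MvP} {m n : ℕ} (hf : IsBihomogeneous f m n) :
    IsBihomogeneous (-f) m n := by
  intro d hd
  exact hf d (by simpa using hd)

lemma bihom_sub {f g : MvP} {m n : ℕ} (hf : IsBihomogeneous f m n)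
    (hg : IsBihomogeneous g m n) : IsBihomogeneous (f - g) m n := by
  rw [sub_eq_add_neg]; exact bihom_add hf (bihom_neg hg)

lemma bihom_mul {f g : MvP} {m n p q : ℕ} (hf : IsBihomogeneous f m n)
    (hg : IsBihomogeneous g p q) : IsBihomogeneous (f * g) (m + p) (n + q) := by
  classical
  intro d hd
  have hmem := MvPolynomial.support_mul f g hd
  rw [Finset.mem_add] at hmem
  obtain ⟨d1, hd1, d2, hd2, rfl⟩ := hmem
  obtain ⟨h1, h2⟩ := hf d1 hd1
  obtain ⟨h3, h4⟩ := hg d2 hd2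
  simp only [Finsupp.add_apply]
  omega

lemma bihom_monomial (d : Fin 4 →₀ ℕ) (c : ℂ) :
    IsBihomogeneous (monomial d c : MvP) (d 0 + d 1) (d 2 + d 3) := by
  intro e he
  have := MvPolynomial.support_monomial_subset he
  simp only [Finset.mem_singleton] at this
  subst this; exact ⟨rfl, rfl⟩

/-- The bihomogeneous component of bidegree `(m,n)`. -/
noncomputable def bicomp (m n : ℕ) (f : MvP) : MvP :=
  AddMonoidAlgebra.ofCoeff
    (Finsupp.filter (fun d : Fin 4 →₀ ℕ => d 0 + d 1 = m ∧ d 2 + d 3 = n) (AddMonoidAlgebra.coeff f))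

lemma coeff_bicomp (m n : ℕ) (f : MvP) (d : Fin 4 →₀ ℕ) :
    coeff d (bicomp m n f) = if d 0 + d 1 = m ∧ d 2 + d 3 = n then coeff d f else 0 :=
  by
  change (Finsupp.filter _ (AddMonoidAlgebra.coeff f)) d = _
  rw [Finsupp.filter_apply]
  rfl

lemma bicomp_isBihom (m n : ℕ) (f : MvP) : IsBihomogeneous (bicomp m n f) m n := by
  intro d hd
  rw [MvPolynomial.mem_support_iff, coeff_bicomp] at hd
  by_contra h
  rw [if_neg h] at hd; exact hd rfl

lemma bicomp_of_bihom {f : MvP} {m n : ℕ} (hf : IsBihomogeneous f m n) :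
    bicomp m n f = f := by
  apply MvPolynomial.ext
  intro d
  rw [coeff_bicomp]
  by_cases h : d 0 + d 1 = m ∧ d 2 + d 3 = n
  · rw [if_pos h]
  · rw [if_neg h]
    by_contra h2
    exact h (hf d (MvPolynomial.mem_support_iff.mpr fun hc => h2 hc.symm))

lemma bicomp_of_bihom_ne {f : MvP} {m n m' n' : ℕ} (hf : IsBihomogeneous f m n)
    (hne : ¬(m' = m ∧ n' = n)) : bicomp m' n' f = 0 := by
  apply MvPolynomial.ext
  intro d
  rw [coeff_bicomp, coeff_zero]
  by_cases h : d 0 + d 1 = m' ∧ d 2 + d 3 = n'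
  · rw [if_pos h]
    by_contra h2
    have := hf d (MvPolynomial.mem_support_iff.mpr h2)
    exact hne ⟨by omega, by omega⟩
  · rw [if_neg h]

lemma bicomp_add (m n : ℕ) (f g : MvP) :
    bicomp m n (f + g) = bicomp m n f + bicomp m n g := by
  apply MvPolynomial.ext
  intro d
  simp only [coeff_add, coeff_bicomp]
  split_ifs <;> simp

lemma bicomp_neg (m n : ℕ) (f : MvP) : bicomp m n (-f) = - bicomp m n f := by
  apply MvPolynomial.ext
  intro d
  simp only [coeff_neg, coeff_bicomp]
  split_ifs <;> simp

lemma bicomp_sub (m n : ℕ) (f g : MvP) :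
    bicomp m n (f - g) = bicomp m n f - bicomp m n g := by
  rw [sub_eq_add_neg, bicomp_add, bicomp_neg, sub_eq_add_neg]

lemma bicomp_zero (m n : ℕ) : bicomp m n (0 : MvP) = 0 := by
  apply MvPolynomial.ext; intro d; simp only [coeff_bicomp, coeff_zero]; split_ifs <;> rfl

lemma bicomp_sum (m n : ℕ) {ι : Type*} (s : Finset ι) (h : ι → MvP) :
    bicomp m n (∑ i ∈ s, h i) = ∑ i ∈ s, bicomp m n (h i) := by
  classical
  induction s using Finset.induction_on with
  | empty => simp [bicomp_zero]
  | insert a s hne ih => rw [Finset.sum_insert hne, Finset.sum_insert hne, bicomp_add, ih]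

lemma bicomp_monomial (m n : ℕ) (d : Fin 4 →₀ ℕ) (c : ℂ) :
    bicomp m n (monomial d c : MvP) =
      if d 0 + d 1 = m ∧ d 2 + d 3 = n then monomial d c else 0 := by
  split_ifs with h
  · exact bicomp_of_bihom (bihom_cast (bihom_monomial d c) h.1 h.2)
  · exact bicomp_of_bihom_ne (bihom_monomial d c) (fun hc => h ⟨hc.1.symm, hc.2.symm⟩)

lemma bicomp_mul_bihom {g : MvP} {p q : ℕ} (hg : IsBihomogeneous g p q)
    (m n : ℕ) (f : MvP) :
    bicomp (m + p) (n + q) (f * g) = bicomp m n f * g := by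
  classical
  have key : ∀ (d : Fin 4 →₀ ℕ) (c : ℂ),
      bicomp (m + p) (n + q) (monomial d c * g) = bicomp m n (monomial d c) * g := by
    intro d c
    by_cases h : d 0 + d 1 = m ∧ d 2 + d 3 = n
    · rw [bicomp_monomial, if_pos h]
      exact bicomp_of_bihom (bihom_cast (bihom_mul (bihom_monomial d c) hg)
        (by omega) (by omega))
    · rw [bicomp_monomial, if_neg h, zero_mul]
      refine bicomp_of_bihom_ne (bihom_mul (bihom_monomial d c) hg) (fun hc => h ?_)
      constructor <;> omega
  calc bicomp (m + p) (n + q) (f * g)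
      = bicomp (m + p) (n + q) ((∑ d ∈ f.support, monomial d (coeff d f)) * g) := by
        rw [MvPolynomial.support_sum_monomial_coeff]
    _ = ∑ d ∈ f.support, bicomp (m + p) (n + q) (monomial d (coeff d f) * g) := by
        rw [Finset.sum_mul, bicomp_sum]
    _ = ∑ d ∈ f.support, bicomp m n (monomial d (coeff d f)) * g :=
        Finset.sum_congr rfl (fun d _ => key d _)
    _ = (∑ d ∈ f.support, bicomp m n (monomial d (coeff d f))) * g := by
        rw [Finset.sum_mul]
    _ = bicomp m n f * g := by rw [← bicomp_sum, MvPolynomial.support_sum_monomial_coeff]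

/-- cancel a nonzero bihomogeneous factor -/
lemma bihom_of_mul_bihom {g w : MvP} {p q r s : ℕ} (hw : IsBihomogeneous w p q)
    (hw0 : w ≠ 0) (hgw : IsBihomogeneous (g * w) (r + p) (s + q)) :
    IsBihomogeneous g r s := by
  intro d hd
  set r' := d 0 + d 1 with hr'
  set s' := d 2 + d 3 with hs'
  have hne : bicomp r' s' g ≠ 0 := by
    intro h
    have := coeff_bicomp r' s' g d
    rw [h, coeff_zero, if_pos ⟨rfl, rfl⟩] at this
    exact (MvPolynomial.mem_support_iff.mp hd) this.symm
  by_contra hcon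
  have hne2 : ¬(r' = r ∧ s' = s) := by
    intro hc; exact hcon ⟨hc.1, hc.2⟩
  have h1 : bicomp (r' + p) (s' + q) (g * w) = bicomp r' s' g * w := bicomp_mul_bihom hw r' s' g
  have h2 : bicomp (r' + p) (s' + q) (g * w) = 0 :=
    bicomp_of_bihom_ne hgw (fun hc => hne2 ⟨by omega, by omega⟩)
  rw [h2] at h1
  exact hne (by
    rcases mul_eq_zero.mp h1.symm with h | h
    · exact h
    · exact absurd h hw0)

/-! ### Monomial division toolkit -/

/-- exponent vectors of the four corner monomials:
`Mex P 0 = (st)^P`, `Mex P 1 = (sv)^P`, `Mex P 2 = (ut)^P`, `Mex P 3 = (uv)^P` -/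
noncomputable def Mex (P : ℕ) (r : Fin 4) : Fin 4 →₀ ℕ :=
  P • (Finsupp.single (if r = 0 ∨ r = 1 then 0 else 1) 1 +
       Finsupp.single (if r = 0 ∨ r = 2 then 2 else 3) 1)

lemma Mex_le_iff_0 (P : ℕ) (e : Fin 4 →₀ ℕ) : Mex P 0 ≤ e ↔ P ≤ e 0 ∧ P ≤ e 2 := by
  rw [Finsupp.le_def]
  constructor
  · intro h
    have h0 := h 0; have h2 := h 2
    simp [Mex, Finsupp.single_apply] at h0 h2
    exact ⟨h0, h2⟩
  · rintro ⟨ha, hb⟩ i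
    fin_cases i <;> simp [Mex, Finsupp.single_apply] <;> omega

lemma Mex_le_iff_1 (P : ℕ) (e : Fin 4 →₀ ℕ) : Mex P 1 ≤ e ↔ P ≤ e 0 ∧ P ≤ e 3 := by
  rw [Finsupp.le_def]
  constructor
  · intro h
    have h0 := h 0; have h3 := h 3
    simp [Mex, Finsupp.single_apply] at h0 h3
    exact ⟨h0, h3⟩
  · rintro ⟨ha, hb⟩ i
    fin_cases i <;> simp [Mex, Finsupp.single_apply] <;> omega

lemma Mex_le_iff_2 (P : ℕ) (e : Fin 4 →₀ ℕ) : Mex P 2 ≤ e ↔ P ≤ e 1 ∧ P ≤ e 2 := by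
  rw [Finsupp.le_def]
  constructor
  · intro h
    have h1 := h 1; have h2 := h 2
    simp [Mex, Finsupp.single_apply] at h1 h2
    exact ⟨h1, h2⟩
  · rintro ⟨ha, hb⟩ i
    fin_cases i <;> simp [Mex, Finsupp.single_apply] <;> omega

lemma Mex_le_iff_3 (P : ℕ) (e : Fin 4 →₀ ℕ) : Mex P 3 ≤ e ↔ P ≤ e 1 ∧ P ≤ e 3 := by
  rw [Finsupp.le_def]
  constructor
  · intro h
    have h1 := h 1; have h3 := h 3
    simp [Mex, Finsupp.single_apply] at h1 h3
    exact ⟨h1, h3⟩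
  · rintro ⟨ha, hb⟩ i
    fin_cases i <;> simp [Mex, Finsupp.single_apply] <;> omega

/-- the four corner monomials as polynomials -/
noncomputable def Mpo (P : ℕ) (r : Fin 4) : MvP := monomial (Mex P r) 1

lemma Mpo_ne_zero (P : ℕ) (r : Fin 4) : Mpo P r ≠ 0 := by
  intro h
  exact one_ne_zero (MvPolynomial.monomial_eq_zero.mp h)

lemma Mpo_eq_pow (P : ℕ) (r : Fin 4) :
    Mpo P r = ((X (if r = 0 ∨ r = 1 then 0 else 1) : MvP) *
      X (if r = 0 ∨ r = 2 then 2 else 3)) ^ P := by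
  rw [Mpo, Mex, MvPolynomial.X, MvPolynomial.X, MvPolynomial.monomial_mul,
    MvPolynomial.monomial_pow]
  simp

lemma bihom_Mpo (P : ℕ) (r : Fin 4) : IsBihomogeneous (Mpo P r) P P := by
  intro d hd
  have := MvPolynomial.support_monomial_subset hd
  simp only [Finset.mem_singleton] at this
  subst this
  fin_cases r <;> simp [Mex, Finsupp.single_apply]

/-- T1 : dividing a monomial multiple -/
lemma divM_monomial_mul (M N : Fin 4 →₀ ℕ) (q : MvP) :
    (monomial M 1 * q).divMonomial (M + N) = q.divMonomial N := by
  rw [MvPolynomial.divMonomial_add, MvPolynomial.divMonomial_monomial_mul]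

/-- T2 : division by a too-large exponent kills the polynomial -/
lemma divM_eq_zero {q : MvP} {i : Fin 4} {K : ℕ} (hq : ∀ d ∈ q.support, d i < K)
    {s : Fin 4 →₀ ℕ} (hs : K ≤ s i) : q.divMonomial s = 0 := by
  apply MvPolynomial.ext
  intro d
  rw [MvPolynomial.coeff_divMonomial, coeff_zero]
  by_contra h
  have := hq _ (MvPolynomial.mem_support_iff.mpr h)
  simp only [Finsupp.add_apply] at this
  omega

/-- T3 : partition of a (2P-1,2P-1)-bihomogeneous polynomial by the four corner
monomials -/
lemma partition_bihom {q : MvP} {P : ℕ} (hP : 1 ≤ P)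
    (hq : IsBihomogeneous q (2 * P - 1) (2 * P - 1)) :
    q = Mpo P 0 * q.divMonomial (Mex P 0) + Mpo P 1 * q.divMonomial (Mex P 1)
      + Mpo P 2 * q.divMonomial (Mex P 2) + Mpo P 3 * q.divMonomial (Mex P 3) := by
  apply MvPolynomial.ext
  intro d
  simp only [coeff_add, Mpo, MvPolynomial.coeff_monomial_mul', one_mul,
    MvPolynomial.coeff_divMonomial]
  have hco : ∀ r : Fin 4, Mex P r ≤ d →
      coeff (Mex P r + (d - Mex P r)) q = coeff d q := by
    intro r h; rw [add_tsub_cancel_of_le h]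
  have e : ∀ r : Fin 4, (if Mex P r ≤ d then coeff (Mex P r + (d - Mex P r)) q else 0)
      = if Mex P r ≤ d then coeff d q else 0 := by
    intro r; split_ifs with h
    · rw [hco r h]
    · rfl
  rw [e 0, e 1, e 2, e 3]
  by_cases hd : coeff d q = 0
  · rw [hd]; split_ifs <;> ring
  · have hsupp := hq d (MvPolynomial.mem_support_iff.mpr hd)
    obtain ⟨hs1, hs2⟩ := hsupp
    simp only [Mex_le_iff_0, Mex_le_iff_1, Mex_le_iff_2, Mex_le_iff_3]
    split_ifs <;> first | (exfalso; omega) | ring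

/-! ### primality / coprimality facts -/

lemma prime_X_mv (i : Fin 4) : Prime (X i : MvP) := by
  have h0 : Prime (X 0 : MvP) := by
    rw [← MulEquiv.prime_iff (finSuccEquiv ℂ 3).toMulEquiv]
    have : (finSuccEquiv ℂ 3).toMulEquiv (X 0 : MvP) = Polynomial.X := by
      simp [MvPolynomial.finSuccEquiv_X_zero]
    rw [this]
    exact Polynomial.prime_X
  have hiff := MulEquiv.prime_iff (renameEquiv ℂ (Equiv.swap (0 : Fin 4) i)).toMulEquiv
    (p := (X 0 : MvP))
  rw [← hiff] at h0
  have heq : (renameEquiv ℂ (Equiv.swap (0 : Fin 4) i)).toMulEquiv (X 0 : MvP) = X i := by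
    simp [MvPolynomial.renameEquiv_apply, MvPolynomial.rename_X, Equiv.swap_apply_left]
  rwa [heq] at h0

lemma X_not_dvd_X {i j : Fin 4} (hij : i ≠ j) : ¬ (X i : MvP) ∣ X j := by
  rintro ⟨e, he⟩
  classical
  have := congrArg (eval (fun k => if k = j then (1 : ℂ) else 0)) he
  simp [hij] at this

lemma isRelPrime_corner {i j k l : Fin 4} (P Q : ℕ)
    (h1 : i ≠ k) (h2 : i ≠ l) (h3 : j ≠ k) (h4 : j ≠ l) :
    IsRelPrime ((X i * X j : MvP) ^ P) ((X k * X l : MvP) ^ Q) := by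
  have base : IsRelPrime (X i * X j : MvP) (X k * X l) := by
    intro d hd1 hd2
    by_contra hu
    have hd0 : d ≠ 0 := by
      rintro rfl
      rw [zero_dvd_iff] at hd1
      exact (mul_ne_zero (MvPolynomial.X_ne_zero i) (MvPolynomial.X_ne_zero j)) hd1
    obtain ⟨p, hpirr, hpd⟩ := WfDvdMonoid.exists_irreducible_factor hu hd0
    have hp : Prime p := UniqueFactorizationMonoid.irreducible_iff_prime.mp hpirr
    -- p divides X i * X j and X k * X l
    have hpij : p ∣ (X i * X j : MvP) := hpd.trans hd1
    have hpkl : p ∣ (X k * X l : MvP) := hpd.trans hd2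
    -- extract the variable p is associated to
    have hXdvd : ∃ w : Fin 4, (w = i ∨ w = j) ∧ (X w : MvP) ∣ X k * X l := by
      rcases hp.2.2 _ _ hpij with hpi | hpj
      · refine ⟨i, Or.inl rfl, ?_⟩
        obtain ⟨e, he⟩ := hpi
        rcases (prime_X_mv i).irreducible.isUnit_or_isUnit he with hue | hue
        · exact absurd hue hp.2.1
        · have : Associated (X i : MvP) p := by
            rw [he]; exact (associated_mul_unit_left p e hue)
          exact this.dvd.trans hpkl
      · refine ⟨j, Or.inr rfl, ?_⟩
        obtain ⟨e, he⟩ := hpj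
        rcases (prime_X_mv j).irreducible.isUnit_or_isUnit he with hue | hue
        · exact absurd hue hp.2.1
        · have : Associated (X j : MvP) p := by
            rw [he]; exact (associated_mul_unit_left p e hue)
          exact this.dvd.trans hpkl
    obtain ⟨w, hw, hwd⟩ := hXdvd
    rcases (prime_X_mv w).2.2 _ _ hwd with hc | hc
    · rcases hw with rfl | rfl
      exacts [X_not_dvd_X h1 hc, X_not_dvd_X h3 hc]
    · rcases hw with rfl | rfl
      exacts [X_not_dvd_X h2 hc, X_not_dvd_X h4 hc]
  exact base.pow

/-! ### evaluation facts -/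

lemma vec_eta (x : Fin 4 → ℂ) : ![x 0, x 1, x 2, x 3] = x := by
  funext i; fin_cases i <;> rfl

/-- a bihomogeneous polynomial of positive `su`-degree vanishes when `s = u = 0` -/
lemma eval_bihom_zero_left {f : MvP} {m n : ℕ} (hf : IsBihomogeneous f m n)
    (hm : 1 ≤ m) {x : Fin 4 → ℂ} (h0 : x 0 = 0) (h1 : x 1 = 0) :
    eval x f = 0 := by
  conv_lhs => rw [← MvPolynomial.support_sum_monomial_coeff f]
  rw [map_sum]
  apply Finset.sum_eq_zero
  intro d hd
  rw [MvPolynomial.eval_monomial]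
  obtain ⟨hbi, _⟩ := hf d hd
  have : d 0 ≥ 1 ∨ d 1 ≥ 1 := by omega
  rcases this with hi | hi
  · have h0mem : (0 : Fin 4) ∈ d.support := Finsupp.mem_support_iff.mpr (by omega)
    rw [Finsupp.prod, Finset.prod_eq_zero h0mem]
    · ring
    · rw [h0, zero_pow (by omega)]
  · have h1mem : (1 : Fin 4) ∈ d.support := Finsupp.mem_support_iff.mpr (by omega)
    rw [Finsupp.prod, Finset.prod_eq_zero h1mem]
    · ring
    · rw [h1, zero_pow (by omega)]

/-- Nullstellensatz: a polynomial all of whose zeros lie over the "irrelevant" locus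
is a unit. -/
lemma isUnit_of_zeros_bad {f : MvP}
    (hf : ∀ x : Fin 4 → ℂ, eval x f = 0 → (x 0 = 0 ∧ x 1 = 0) ∨ (x 2 = 0 ∧ x 3 = 0)) :
    IsUnit f := by
  have key : ∀ i j : Fin 4, (i = 0 ∨ i = 1) → (j = 2 ∨ j = 3) →
      ∃ N : ℕ, f ∣ (X i * X j : MvP) ^ N := by
    intro i j hi hj
    have hrad : (X i * X j : MvP) ∈ (Ideal.span {f} : Ideal MvP).radical := by
      rw [← MvPolynomial.vanishingIdeal_zeroLocus_eq_radical (K := ℂ)]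
      intro x hx
      have hfx : eval x f = 0 := hx f (Ideal.subset_span rfl)
      have hbad := hf x hfx
      rw [map_mul, MvPolynomial.aeval_X, MvPolynomial.aeval_X]
      rcases hbad with ⟨ha, hb⟩ | ⟨ha, hb⟩
      · rcases hi with rfl | rfl <;> simp [ha, hb]
      · rcases hj with rfl | rfl <;> simp [ha, hb]
    obtain ⟨N, hN⟩ := Ideal.mem_radical_iff.mp hrad
    obtain ⟨q, hq⟩ := Ideal.mem_span_singleton'.mp hN
    exact ⟨N, q, hq.symm.trans (mul_comm q f)⟩
  obtain ⟨N1, hN1⟩ := key 0 2 (Or.inl rfl) (Or.inl rfl)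
  obtain ⟨N2, hN2⟩ := key 1 3 (Or.inr rfl) (Or.inr rfl)
  exact isRelPrime_corner (i := 0) (j := 2) (k := 1) (l := 3) N1 N2
    (by decide) (by decide) (by decide) (by decide) hN1 hN2

/-! ### kernel of the Koszul map at 2-forms -/

lemma ker_d2 {a b c x y z : MvP} {m n p q : ℕ}
    (hCDU : ∀ d : MvP, d ∣ a → d ∣ b → d ∣ c → IsUnit d)
    (hac : ¬(a = 0 ∧ c = 0))
    (ha : IsBihomogeneous a m n) (hc : IsBihomogeneous c m n)
    (hy : IsBihomogeneous y (p + m) (q + n)) (hz : IsBihomogeneous z (p + m) (q + n))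
    (e1 : x * c + y * b = 0) (e2 : -(y * a) + z * c = 0) (e3 : -(x * a) - z * b = 0) :
    ∃ g : MvP, IsBihomogeneous g p q ∧ x = -(g * b) ∧ y = g * c ∧ z = g * a := by
  by_cases hc0 : c = 0
  · have ha0 : a ≠ 0 := fun h => hac ⟨h, hc0⟩
    subst hc0
    have hy0 : y = 0 := by
      have hya : y * a = 0 := by linear_combination -e2
      rcases mul_eq_zero.mp hya with h | h
      · exact h
      · exact absurd h ha0
    have hdvd : a ∣ z * b := ⟨-x, by linear_combination -e3⟩
    have hrp : IsRelPrime a b := fun d hda hdb => hCDU d hda hdb (dvd_zero d)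
    obtain ⟨g, hg⟩ := hrp.dvd_of_dvd_mul_right hdvd
    refine ⟨g, ?_, ?_, ?_, ?_⟩
    · exact bihom_of_mul_bihom ha ha0
        (show IsBihomogeneous (g * a) (p + m) (q + n) by
          rw [mul_comm g a, ← hg]; exact hz)
    · have hxa : x * a = (-(g * b)) * a := by linear_combination -e3 - b * hg
      exact mul_right_cancel₀ ha0 hxa
    · rw [hy0, mul_zero]
    · rw [hg]; ring
  · letI : NormalizedGCDMonoid MvP := Classical.choice inferInstance
    have h1 : c ∣ y * a := ⟨z, by linear_combination -e2⟩
    have h2 : c ∣ y * b := ⟨-x, by linear_combination e1⟩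
    have hg1 : c ∣ y * gcd a b := by
      have hcg := dvd_gcd h1 h2
      exact hcg.trans (gcd_mul_left' y a b).dvd
    have hrp : IsRelPrime c (gcd a b) := fun d hdc hdg =>
      hCDU d (hdg.trans (gcd_dvd_left a b)) (hdg.trans (gcd_dvd_right a b)) hdc
    obtain ⟨g, hg⟩ := hrp.dvd_of_dvd_mul_right hg1
    refine ⟨g, ?_, ?_, ?_, ?_⟩
    · exact bihom_of_mul_bihom hc hc0
        (show IsBihomogeneous (g * c) (p + m) (q + n) by
          rw [mul_comm g c, ← hg]; exact hy)
    · have hxc : x * c = (-(g * b)) * c := by linear_combination e1 - b * hg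
      exact mul_right_cancel₀ hc0 hxc
    · rw [hg]; ring
    · have hzc : z * c = (g * a) * c := by linear_combination e2 + a * hg
      exact mul_right_cancel₀ hc0 hzc

lemma bicomp_mul_bihom' {g : MvP} {p q : ℕ} (hg : IsBihomogeneous g p q)
    (m n M N : ℕ) (f : MvP) (hM : M = m + p) (hN : N = n + q) :
    bicomp M N (f * g) = bicomp m n f * g := by
  subst hM hN; exact bicomp_mul_bihom hg m n f

lemma coord_lt_of_mul_monomial {g : MvP} {D E : ℕ} (hg : IsBihomogeneous g D E)
    (s : Fin 4 →₀ ℕ) {i : Fin 4} (hsi : s i = 0) {K : ℕ}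
    (hK : D < K) (hK' : E < K) :
    ∀ d ∈ (monomial s (1:ℂ) * g).support, d i < K := by
  classical
  intro d hd
  have hmem := MvPolynomial.support_mul (monomial s (1:ℂ)) g hd
  rw [Finset.mem_add] at hmem
  obtain ⟨d1, hd1, d2, hd2, rfl⟩ := hmem
  have hd1' := MvPolynomial.support_monomial_subset hd1
  simp only [Finset.mem_singleton] at hd1'
  subst hd1'
  obtain ⟨hA, hB⟩ := hg d2 hd2
  have h2 : d2 i < K := by
    have key : ∀ j : Fin 4, d2 j < K := by
      intro j
      fin_cases j
      · exact show d2 0 < K by omega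
      · exact show d2 1 < K by omega
      · exact show d2 2 < K by omega
      · exact show d2 3 < K by omega
    exact key i
  simp only [Finsupp.add_apply, hsi, zero_add]
  exact h2

set_option maxHeartbeats 3200000 in
/-- The main gluing argument. -/
lemma glue {a b c A B C : MvP} {m n P : ℕ}
    (hm : 1 ≤ m) (hn : 1 ≤ n) (hPm : m ≤ P) (hPn : n ≤ P)
    (hCDU : ∀ d : MvP, d ∣ a → d ∣ b → d ∣ c → IsUnit d)
    (hac : ¬(a = 0 ∧ c = 0)) (hone : a ≠ 0 ∨ b ≠ 0 ∨ c ≠ 0)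
    (ha : IsBihomogeneous a m n) (hc : IsBihomogeneous c m n)
    (H00 H01 H02 H10 H11 H12 H20 H21 H22 H30 H31 H32 : MvP)
    (b00 : IsBihomogeneous H00 (P+m-1) (P+n-1)) (b01 : IsBihomogeneous H01 (P+m-1) (P+n-1))
    (b02 : IsBihomogeneous H02 (P+m-1) (P+n-1)) (b10 : IsBihomogeneous H10 (P+m-1) (P+n-1))
    (b11 : IsBihomogeneous H11 (P+m-1) (P+n-1)) (b12 : IsBihomogeneous H12 (P+m-1) (P+n-1))
    (b20 : IsBihomogeneous H20 (P+m-1) (P+n-1)) (b21 : IsBihomogeneous H21 (P+m-1) (P+n-1))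
    (b22 : IsBihomogeneous H22 (P+m-1) (P+n-1)) (b30 : IsBihomogeneous H30 (P+m-1) (P+n-1))
    (b31 : IsBihomogeneous H31 (P+m-1) (P+n-1)) (b32 : IsBihomogeneous H32 (P+m-1) (P+n-1))
    (d1_0 : H00 * c + H01 * b = Mpo P 0 * A)
    (d2_0 : -(H01 * a) + H02 * c = Mpo P 0 * B)
    (d3_0 : -(H00 * a) - H02 * b = Mpo P 0 * C)
    (d1_1 : H10 * c + H11 * b = Mpo P 1 * A)
    (d2_1 : -(H11 * a) + H12 * c = Mpo P 1 * B)
    (d3_1 : -(H10 * a) - H12 * b = Mpo P 1 * C)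
    (d1_2 : H20 * c + H21 * b = Mpo P 2 * A)
    (d2_2 : -(H21 * a) + H22 * c = Mpo P 2 * B)
    (d3_2 : -(H20 * a) - H22 * b = Mpo P 2 * C)
    (d1_3 : H30 * c + H31 * b = Mpo P 3 * A)
    (d2_3 : -(H31 * a) + H32 * c = Mpo P 3 * B)
    (d3_3 : -(H30 * a) - H32 * b = Mpo P 3 * C) :
    ∃ k1 k2 k3 : MvP,
      A = k1 * c + k2 * b ∧ B = -(k2 * a) + k3 * c ∧ C = -(k1 * a) - k3 * b := by
  have hP1 : 1 ≤ P := le_trans hm hPm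
  -- syzygies between charts r < s, components (x,y,z)
  have mkbih : ∀ {u v : MvP} (r s : Fin 4),
      IsBihomogeneous u (P+m-1) (P+n-1) → IsBihomogeneous v (P+m-1) (P+n-1) →
      IsBihomogeneous (Mpo P s * u - Mpo P r * v) (2*P-1 + m) (2*P-1 + n) := by
    intro u v r s hu hv
    exact bihom_cast (bihom_sub (bihom_mul (bihom_Mpo P s) hu) (bihom_mul (bihom_Mpo P r) hv))
      (by omega) (by omega)
  obtain ⟨g01, bg01, hx01, hy01, hz01⟩ :=
    ker_d2 (p := 2*P-1) (q := 2*P-1) (x := Mpo P 1 * H00 - Mpo P 0 * H10) hCDU hac ha hc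
      (mkbih 0 1 b01 b11) (mkbih 0 1 b02 b12)
      (by linear_combination Mpo P 1 * d1_0 - Mpo P 0 * d1_1)
      (by linear_combination Mpo P 1 * d2_0 - Mpo P 0 * d2_1)
      (by linear_combination Mpo P 1 * d3_0 - Mpo P 0 * d3_1)
  obtain ⟨g02, bg02, hx02, hy02, hz02⟩ :=
    ker_d2 (p := 2*P-1) (q := 2*P-1) (x := Mpo P 2 * H00 - Mpo P 0 * H20) hCDU hac ha hc
      (mkbih 0 2 b01 b21) (mkbih 0 2 b02 b22)
      (by linear_combination Mpo P 2 * d1_0 - Mpo P 0 * d1_2)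
      (by linear_combination Mpo P 2 * d2_0 - Mpo P 0 * d2_2)
      (by linear_combination Mpo P 2 * d3_0 - Mpo P 0 * d3_2)
  obtain ⟨g03, bg03, hx03, hy03, hz03⟩ :=
    ker_d2 (p := 2*P-1) (q := 2*P-1) (x := Mpo P 3 * H00 - Mpo P 0 * H30) hCDU hac ha hc
      (mkbih 0 3 b01 b31) (mkbih 0 3 b02 b32)
      (by linear_combination Mpo P 3 * d1_0 - Mpo P 0 * d1_3)
      (by linear_combination Mpo P 3 * d2_0 - Mpo P 0 * d2_3)
      (by linear_combination Mpo P 3 * d3_0 - Mpo P 0 * d3_3)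
  obtain ⟨g13, bg13, hx13, hy13, hz13⟩ :=
    ker_d2 (p := 2*P-1) (q := 2*P-1) (x := Mpo P 3 * H10 - Mpo P 1 * H30) hCDU hac ha hc
      (mkbih 1 3 b11 b31) (mkbih 1 3 b12 b32)
      (by linear_combination Mpo P 3 * d1_1 - Mpo P 1 * d1_3)
      (by linear_combination Mpo P 3 * d2_1 - Mpo P 1 * d2_3)
      (by linear_combination Mpo P 3 * d3_1 - Mpo P 1 * d3_3)
  obtain ⟨g23, bg23, hx23, hy23, hz23⟩ :=
    ker_d2 (p := 2*P-1) (q := 2*P-1) (x := Mpo P 3 * H20 - Mpo P 2 * H30) hCDU hac ha hc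
      (mkbih 2 3 b21 b31) (mkbih 2 3 b22 b32)
      (by linear_combination Mpo P 3 * d1_2 - Mpo P 2 * d1_3)
      (by linear_combination Mpo P 3 * d2_2 - Mpo P 2 * d2_3)
      (by linear_combination Mpo P 3 * d3_2 - Mpo P 2 * d3_3)
  -- cocycle relations
  have R1 : Mpo P 3 * g01 - Mpo P 1 * g03 + Mpo P 0 * g13 = 0 := by
    rcases hone with h | h | h
    · have hmul : (Mpo P 3 * g01 - Mpo P 1 * g03 + Mpo P 0 * g13) * a = 0 := by
        linear_combination (-(Mpo P 3)) * hz01 + Mpo P 1 * hz03 + (-(Mpo P 0)) * hz13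
      rcases mul_eq_zero.mp hmul with h0 | h0
      · exact h0
      · exact absurd h0 h
    · have hmul : (Mpo P 3 * g01 - Mpo P 1 * g03 + Mpo P 0 * g13) * b = 0 := by
        linear_combination Mpo P 3 * hx01 - Mpo P 1 * hx03 + Mpo P 0 * hx13
      rcases mul_eq_zero.mp hmul with h0 | h0
      · exact h0
      · exact absurd h0 h
    · have hmul : (Mpo P 3 * g01 - Mpo P 1 * g03 + Mpo P 0 * g13) * c = 0 := by
        linear_combination (-(Mpo P 3)) * hy01 + Mpo P 1 * hy03 + (-(Mpo P 0)) * hy13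
      rcases mul_eq_zero.mp hmul with h0 | h0
      · exact h0
      · exact absurd h0 h
  have R2 : Mpo P 3 * g02 - Mpo P 2 * g03 + Mpo P 0 * g23 = 0 := by
    rcases hone with h | h | h
    · have hmul : (Mpo P 3 * g02 - Mpo P 2 * g03 + Mpo P 0 * g23) * a = 0 := by
        linear_combination (-(Mpo P 3)) * hz02 + Mpo P 2 * hz03 + (-(Mpo P 0)) * hz23
      rcases mul_eq_zero.mp hmul with h0 | h0
      · exact h0
      · exact absurd h0 h
    · have hmul : (Mpo P 3 * g02 - Mpo P 2 * g03 + Mpo P 0 * g23) * b = 0 := by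
        linear_combination Mpo P 3 * hx02 - Mpo P 2 * hx03 + Mpo P 0 * hx23
      rcases mul_eq_zero.mp hmul with h0 | h0
      · exact h0
      · exact absurd h0 h
    · have hmul : (Mpo P 3 * g02 - Mpo P 2 * g03 + Mpo P 0 * g23) * c = 0 := by
        linear_combination (-(Mpo P 3)) * hy02 + Mpo P 2 * hy03 + (-(Mpo P 0)) * hy23
      rcases mul_eq_zero.mp hmul with h0 | h0
      · exact h0
      · exact absurd h0 h
  -- the two "wrong" pieces of g03 vanish
  have hv2 : g03.divMonomial (Mex P 2) = 0 := by
    have hre : Mpo P 2 * g03 = Mpo P 3 * g02 + Mpo P 0 * g23 := by linear_combination - R2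
    have hL : (Mpo P 2 * g03).divMonomial (Mex P 2 + Mex P 2)
        = g03.divMonomial (Mex P 2) := divM_monomial_mul _ _ _
    rw [hre, MvPolynomial.add_divMonomial] at hL
    rw [← hL]
    have hz1 : (Mpo P 3 * g02).divMonomial (Mex P 2 + Mex P 2) = 0 := by
      apply divM_eq_zero (i := 2) (K := 2*P)
        (coord_lt_of_mul_monomial bg02 (Mex P 3) (by simp [Mex, Finsupp.single_apply])
          (by omega) (by omega))
      simp [Mex, Finsupp.single_apply]
      omega
    have hz2 : (Mpo P 0 * g23).divMonomial (Mex P 2 + Mex P 2) = 0 := by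
      apply divM_eq_zero (i := 1) (K := 2*P)
        (coord_lt_of_mul_monomial bg23 (Mex P 0) (by simp [Mex, Finsupp.single_apply])
          (by omega) (by omega))
      simp [Mex, Finsupp.single_apply]
      omega
    rw [hz1, hz2, add_zero]
  have hv1 : g03.divMonomial (Mex P 1) = 0 := by
    have hre : Mpo P 1 * g03 = Mpo P 3 * g01 + Mpo P 0 * g13 := by linear_combination - R1
    have hL : (Mpo P 1 * g03).divMonomial (Mex P 1 + Mex P 1)
        = g03.divMonomial (Mex P 1) := divM_monomial_mul _ _ _
    rw [hre, MvPolynomial.add_divMonomial] at hL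
    rw [← hL]
    have hz1 : (Mpo P 3 * g01).divMonomial (Mex P 1 + Mex P 1) = 0 := by
      apply divM_eq_zero (i := 0) (K := 2*P)
        (coord_lt_of_mul_monomial bg01 (Mex P 3) (by simp [Mex, Finsupp.single_apply])
          (by omega) (by omega))
      simp [Mex, Finsupp.single_apply]
      omega
    have hz2 : (Mpo P 0 * g13).divMonomial (Mex P 1 + Mex P 1) = 0 := by
      apply divM_eq_zero (i := 3) (K := 2*P)
        (coord_lt_of_mul_monomial bg13 (Mex P 0) (by simp [Mex, Finsupp.single_apply])
          (by omega) (by omega))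
      simp [Mex, Finsupp.single_apply]
      omega
    rw [hz1, hz2, add_zero]
  -- partition of g03
  have hpart0 := partition_bihom hP1 bg03
  rw [hv1, hv2, mul_zero, mul_zero, add_zero, add_zero] at hpart0
  set fD := g03.divMonomial (Mex P 0) with hfD
  set fA := g03.divMonomial (Mex P 3) with hfA
  have hpart : g03 = Mpo P 0 * fD + Mpo P 3 * fA := hpart0
  -- corrected chart equations glue
  have hc1 : Mpo P 3 * (H00 + fA * b) = Mpo P 0 * (H30 - fD * b) := by
    linear_combination hx03 - b * hpart
  have hc2 : Mpo P 3 * (H01 - fA * c) = Mpo P 0 * (H31 + fD * c) := by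
    linear_combination hy03 + c * hpart
  have hc3 : Mpo P 3 * (H02 - fA * a) = Mpo P 0 * (H32 + fD * a) := by
    linear_combination hz03 + a * hpart
  -- the corner monomials are coprime
  have hrp : IsRelPrime (Mpo P 0) (Mpo P 3) := by
    have e0 : Mpo P 0 = (X 0 * X 2 : MvP) ^ P := by rw [Mpo_eq_pow]; norm_num
    have e3 : Mpo P 3 = (X 1 * X 3 : MvP) ^ P := by
      rw [Mpo_eq_pow]
      norm_num [show ¬((3:Fin 4) = 0 ∨ (3:Fin 4) = 1) by decide,
        show ¬((3:Fin 4) = 0 ∨ (3:Fin 4) = 2) by decide]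
    rw [e0, e3]
    exact isRelPrime_corner P P (by decide) (by decide) (by decide) (by decide)
  obtain ⟨k1, hk1⟩ := hrp.dvd_of_dvd_mul_left ⟨H30 - fD * b, hc1⟩
  obtain ⟨k2, hk2⟩ := hrp.dvd_of_dvd_mul_left ⟨H31 + fD * c, hc2⟩
  obtain ⟨k3, hk3⟩ := hrp.dvd_of_dvd_mul_left ⟨H32 + fD * a, hc3⟩
  refine ⟨k1, k2, k3, ?_, ?_, ?_⟩
  · refine mul_left_cancel₀ (Mpo_ne_zero P 0) ?_
    linear_combination - d1_0 + c * hk1 + b * hk2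
  · refine mul_left_cancel₀ (Mpo_ne_zero P 0) ?_
    linear_combination - d2_0 - a * hk2 + c * hk3
  · refine mul_left_cancel₀ (Mpo_ne_zero P 0) ?_
    linear_combination - d3_0 - a * hk1 - b * hk3

end KoszulAux

open KoszulAux in
set_option maxHeartbeats 3200000 in
/-- If `a, b, c` are bihomogeneous of bidegree `(m,n)`, `m,n ≥ 1`,
with no common zeros on `ℙ¹ × ℙ¹`, then every syzygy on `a, b, c` of bidegree
`(2m−1, 2n−1)` is a Koszul syzygy. -/
theorem bidegree_syzygy_is_koszul (m n : ℕ) (hm : 1 ≤ m) (hn : 1 ≤ n)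
    (a b c : MvPolynomial (Fin 4) ℂ)
    (ha : IsBihomogeneous a m n) (hb : IsBihomogeneous b m n)
    (hc : IsBihomogeneous c m n)
    (hnobp : ∀ s₀ u₀ t₀ v₀ : ℂ, (s₀, u₀) ≠ (0, 0) → (t₀, v₀) ≠ (0, 0) →
      ¬ (eval ![s₀, u₀, t₀, v₀] a = 0 ∧ eval ![s₀, u₀, t₀, v₀] b = 0 ∧
         eval ![s₀, u₀, t₀, v₀] c = 0)) :
    ∀ A B C : MvPolynomial (Fin 4) ℂ,
      IsBihomogeneous A (2 * m - 1) (2 * n - 1) →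
      IsBihomogeneous B (2 * m - 1) (2 * n - 1) →
      IsBihomogeneous C (2 * m - 1) (2 * n - 1) →
      A * a + B * b + C * c = 0 →
      ∃ h₁ h₂ h₃ : MvPolynomial (Fin 4) ℂ,
        IsBihomogeneous h₁ (m - 1) (n - 1) ∧
        IsBihomogeneous h₂ (m - 1) (n - 1) ∧
        IsBihomogeneous h₃ (m - 1) (n - 1) ∧
        A = h₁ * c + h₂ * b ∧ B = -h₂ * a + h₃ * c ∧ C = -h₁ * a - h₃ * b := by
  intro A B C hA hB hC hsyz
  -- common zeros lie over the irrelevant locus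
  have hzero_bad : ∀ x : Fin 4 → ℂ, eval x a = 0 → eval x b = 0 → eval x c = 0 →
      (x 0 = 0 ∧ x 1 = 0) ∨ (x 2 = 0 ∧ x 3 = 0) := by
    intro x hax hbx hcx
    by_contra hcon
    push_neg at hcon
    obtain ⟨h1, h2⟩ := hcon
    exact hnobp (x 0) (x 1) (x 2) (x 3) (by simpa [Prod.ext_iff] using h1)
      (by simpa [Prod.ext_iff] using h2) (by rw [vec_eta]; exact ⟨hax, hbx, hcx⟩)
  have hCDU : ∀ d : MvP, d ∣ a → d ∣ b → d ∣ c → IsUnit d := by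
    intro d hda hdb hdc
    apply isUnit_of_zeros_bad (f := d)
    intro x hx
    obtain ⟨a1, ha1⟩ := hda
    obtain ⟨b1, hb1⟩ := hdb
    obtain ⟨c1, hc1⟩ := hdc
    exact hzero_bad x (by rw [ha1, map_mul, hx, zero_mul])
      (by rw [hb1, map_mul, hx, zero_mul]) (by rw [hc1, map_mul, hx, zero_mul])
  have habc : ¬(a = 0 ∧ b = 0 ∧ c = 0) := by
    rintro ⟨h1, h2, h3⟩
    have := hzero_bad (fun _ => 1) (by rw [h1]; exact map_zero _)
      (by rw [h2]; exact map_zero _) (by rw [h3]; exact map_zero _)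
    simp at this
  have hone : a ≠ 0 ∨ b ≠ 0 ∨ c ≠ 0 := by
    by_contra hq
    push_neg at hq
    exact habc ⟨hq.1, hq.2.1, hq.2.2⟩
  have hac : ¬(a = 0 ∧ c = 0) := by
    rintro ⟨ha0, hc0⟩
    have hbu : IsUnit b := by
      apply isUnit_of_zeros_bad
      intro x hx
      exact hzero_bad x (by rw [ha0]; exact map_zero _) hx
        (by rw [hc0]; exact map_zero _)
    obtain ⟨e, he⟩ := isUnit_iff_dvd_one.mp hbu
    have hx0 : eval ![0,0,1,1] b = 0 :=
      eval_bihom_zero_left hb hm (by simp) (by simp)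
    have h2 := congrArg (eval ![0,0,1,1]) he
    rw [map_one, map_mul, hx0, zero_mul] at h2
    norm_num at h2
  -- Nullstellensatz : high powers of the corner monomials lie in (a,b,c)
  have hrad : ∀ i j : Fin 4, (i = 0 ∨ i = 1) → (j = 2 ∨ j = 3) →
      ∃ N, ((X i * X j : MvP)) ^ N ∈ Ideal.span {a, b, c} := by
    intro i j hi hj
    have hmem : (X i * X j : MvP) ∈ (Ideal.span {a, b, c} : Ideal MvP).radical := by
      rw [← MvPolynomial.vanishingIdeal_zeroLocus_eq_radical (K := ℂ)]
      intro x hx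
      have hax : eval x a = 0 := hx a (Ideal.subset_span (by simp))
      have hbx : eval x b = 0 := hx b (Ideal.subset_span (by simp))
      have hcx : eval x c = 0 := hx c (Ideal.subset_span (by simp))
      have hbad := hzero_bad x hax hbx hcx
      rw [map_mul, MvPolynomial.aeval_X, MvPolynomial.aeval_X]
      rcases hbad with ⟨hp, hq⟩ | ⟨hp, hq⟩
      · rcases hi with rfl | rfl
        · rw [hp, zero_mul]
        · rw [hq, zero_mul]
      · rcases hj with rfl | rfl
        · rw [hp, mul_zero]
        · rw [hq, mul_zero]
    exact Ideal.mem_radical_iff.mp hmem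
  obtain ⟨N0, hN0⟩ := hrad 0 2 (Or.inl rfl) (Or.inl rfl)
  obtain ⟨N1, hN1⟩ := hrad 0 3 (Or.inl rfl) (Or.inr rfl)
  obtain ⟨N2, hN2⟩ := hrad 1 2 (Or.inr rfl) (Or.inl rfl)
  obtain ⟨N3, hN3⟩ := hrad 1 3 (Or.inr rfl) (Or.inr rfl)
  set P : ℕ := N0 + N1 + N2 + N3 + m + n with hPdef
  have hPm : m ≤ P := by omega
  have hPn : n ≤ P := by omega
  have hpow : ∀ (i j : Fin 4) (N : ℕ), N ≤ P →
      (X i * X j : MvP) ^ N ∈ Ideal.span {a, b, c} →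
      (X i * X j : MvP) ^ P ∈ Ideal.span {a, b, c} := by
    intro i j N hNP hmem
    have hsp : (X i * X j : MvP) ^ P = (X i * X j) ^ (P - N) * (X i * X j) ^ N := by
      rw [← pow_add]
      congr 1
      omega
    rw [hsp]
    exact Ideal.mul_mem_left _ _ hmem
  have e0 : Mpo P 0 = (X 0 * X 2 : MvP) ^ P := by
    rw [Mpo_eq_pow P 0,
      show (if (0:Fin 4) = 0 ∨ (0:Fin 4) = 1 then (0:Fin 4) else 1) = 0 from by decide,
      show (if (0:Fin 4) = 0 ∨ (0:Fin 4) = 2 then (2:Fin 4) else 3) = 2 from by decide]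
  have e1 : Mpo P 1 = (X 0 * X 3 : MvP) ^ P := by
    rw [Mpo_eq_pow P 1,
      show (if (1:Fin 4) = 0 ∨ (1:Fin 4) = 1 then (0:Fin 4) else 1) = 0 from by decide,
      show (if (1:Fin 4) = 0 ∨ (1:Fin 4) = 2 then (2:Fin 4) else 3) = 3 from by decide]
  have e2 : Mpo P 2 = (X 1 * X 2 : MvP) ^ P := by
    rw [Mpo_eq_pow P 2,
      show (if (2:Fin 4) = 0 ∨ (2:Fin 4) = 1 then (0:Fin 4) else 1) = 1 from by decide,
      show (if (2:Fin 4) = 0 ∨ (2:Fin 4) = 2 then (2:Fin 4) else 3) = 2 from by decide]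
  have e3 : Mpo P 3 = (X 1 * X 3 : MvP) ^ P := by
    rw [Mpo_eq_pow P 3,
      show (if (3:Fin 4) = 0 ∨ (3:Fin 4) = 1 then (0:Fin 4) else 1) = 1 from by decide,
      show (if (3:Fin 4) = 0 ∨ (3:Fin 4) = 2 then (2:Fin 4) else 3) = 3 from by decide]
  have hmem0 : Mpo P 0 ∈ Ideal.span {a, b, c} := by
    rw [e0]; exact hpow _ _ N0 (by omega) hN0
  have hmem1 : Mpo P 1 ∈ Ideal.span {a, b, c} := by
    rw [e1]; exact hpow _ _ N1 (by omega) hN1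
  have hmem2 : Mpo P 2 ∈ Ideal.span {a, b, c} := by
    rw [e2]; exact hpow _ _ N2 (by omega) hN2
  have hmem3 : Mpo P 3 ∈ Ideal.span {a, b, c} := by
    rw [e3]; exact hpow _ _ N3 (by omega) hN3
  -- bihomogeneous representations of the corner monomials
  have combo : ∀ p : MvP, p ∈ Ideal.span {a, b, c} →
      ∃ α β γ : MvP, p = α * a + β * b + γ * c := by
    intro p hp
    rw [Ideal.mem_span_insert] at hp
    obtain ⟨α, z1, hz1, hp1⟩ := hp
    rw [Ideal.mem_span_insert] at hz1
    obtain ⟨β, z2, hz2, hz⟩ := hz1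
    obtain ⟨γ, hγ⟩ := Ideal.mem_span_singleton'.mp hz2
    exact ⟨α, β, γ, by rw [hp1, hz, ← hγ]; ring⟩
  have comboB : ∀ r : Fin 4, Mpo P r ∈ Ideal.span {a, b, c} →
      ∃ α β γ : MvP, IsBihomogeneous α (P-m) (P-n) ∧ IsBihomogeneous β (P-m) (P-n) ∧
        IsBihomogeneous γ (P-m) (P-n) ∧ α * a + β * b + γ * c = Mpo P r := by
    intro r hmem
    obtain ⟨α₀, β₀, γ₀, hco⟩ := combo _ hmem
    have h1 := congrArg (bicomp P P) hco
    rw [bicomp_of_bihom (bihom_Mpo P r), bicomp_add, bicomp_add,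
      bicomp_mul_bihom' ha (P-m) (P-n) P P α₀ (by omega) (by omega),
      bicomp_mul_bihom' hb (P-m) (P-n) P P β₀ (by omega) (by omega),
      bicomp_mul_bihom' hc (P-m) (P-n) P P γ₀ (by omega) (by omega)] at h1
    exact ⟨_, _, _, bicomp_isBihom _ _ _, bicomp_isBihom _ _ _, bicomp_isBihom _ _ _,
      h1.symm⟩
  obtain ⟨α0, β0, γ0, bα0, bβ0, bγ0, hid0⟩ := comboB 0 hmem0
  obtain ⟨α1, β1, γ1, bα1, bβ1, bγ1, hid1⟩ := comboB 1 hmem1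
  obtain ⟨α2, β2, γ2, bα2, bβ2, bγ2, hid2⟩ := comboB 2 hmem2
  obtain ⟨α3, β3, γ3, bα3, bβ3, bγ3, hid3⟩ := comboB 3 hmem3
  -- local Koszul trivializations and gluing
  have mkb : ∀ {u v : MvP}, IsBihomogeneous u (2*m-1) (2*n-1) →
      IsBihomogeneous v (P-m) (P-n) →
      ∀ {w t : MvP}, IsBihomogeneous w (2*m-1) (2*n-1) →
      IsBihomogeneous t (P-m) (P-n) →
      IsBihomogeneous (u * v - w * t) (P+m-1) (P+n-1) := by
    intro u v hu hv w t hw ht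
    exact bihom_cast (bihom_sub (bihom_mul hu hv) (bihom_mul hw ht))
      (by omega) (by omega)
  obtain ⟨k1, k2, k3, hk1, hk2, hk3⟩ :=
    glue (A := A) (B := B) (C := C) hm hn hPm hPn hCDU hac hone ha hc
      (A * γ0 - C * α0) (A * β0 - B * α0) (B * γ0 - C * β0)
      (A * γ1 - C * α1) (A * β1 - B * α1) (B * γ1 - C * β1)
      (A * γ2 - C * α2) (A * β2 - B * α2) (B * γ2 - C * β2)
      (A * γ3 - C * α3) (A * β3 - B * α3) (B * γ3 - C * β3)
      (mkb hA bγ0 hC bα0) (mkb hA bβ0 hB bα0) (mkb hB bγ0 hC bβ0)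
      (mkb hA bγ1 hC bα1) (mkb hA bβ1 hB bα1) (mkb hB bγ1 hC bβ1)
      (mkb hA bγ2 hC bα2) (mkb hA bβ2 hB bα2) (mkb hB bγ2 hC bβ2)
      (mkb hA bγ3 hC bα3) (mkb hA bβ3 hB bα3) (mkb hB bγ3 hC bβ3)
      (by linear_combination A * hid0 - α0 * hsyz)
      (by linear_combination B * hid0 - β0 * hsyz)
      (by linear_combination C * hid0 - γ0 * hsyz)
      (by linear_combination A * hid1 - α1 * hsyz)
      (by linear_combination B * hid1 - β1 * hsyz)
      (by linear_combination C * hid1 - γ1 * hsyz)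
      (by linear_combination A * hid2 - α2 * hsyz)
      (by linear_combination B * hid2 - β2 * hsyz)
      (by linear_combination C * hid2 - γ2 * hsyz)
      (by linear_combination A * hid3 - α3 * hsyz)
      (by linear_combination B * hid3 - β3 * hsyz)
      (by linear_combination C * hid3 - γ3 * hsyz)
  -- extract the bihomogeneous components
  refine ⟨bicomp (m-1) (n-1) k1, bicomp (m-1) (n-1) k2, bicomp (m-1) (n-1) k3,
    bicomp_isBihom _ _ _, bicomp_isBihom _ _ _, bicomp_isBihom _ _ _, ?_, ?_, ?_⟩
  · have h := congrArg (bicomp (2*m-1) (2*n-1)) hk1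
    rw [bicomp_of_bihom hA, bicomp_add,
      bicomp_mul_bihom' hc (m-1) (n-1) (2*m-1) (2*n-1) k1 (by omega) (by omega),
      bicomp_mul_bihom' hb (m-1) (n-1) (2*m-1) (2*n-1) k2 (by omega) (by omega)] at h
    exact h
  · have h := congrArg (bicomp (2*m-1) (2*n-1)) hk2
    rw [bicomp_of_bihom hB, bicomp_add, bicomp_neg,
      bicomp_mul_bihom' ha (m-1) (n-1) (2*m-1) (2*n-1) k2 (by omega) (by omega),
      bicomp_mul_bihom' hc (m-1) (n-1) (2*m-1) (2*n-1) k3 (by omega) (by omega)] at h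
    linear_combination h
  · have h := congrArg (bicomp (2*m-1) (2*n-1)) hk3
    rw [bicomp_of_bihom hC, bicomp_sub, bicomp_neg,
      bicomp_mul_bihom' ha (m-1) (n-1) (2*m-1) (2*n-1) k1 (by omega) (by omega),
      bicomp_mul_bihom' hb (m-1) (n-1) (2*m-1) (2*n-1) k3 (by omega) (by omega)] at h
    linear_combination h
end

section
/- Let a, b, c, d ∈ R = ℂ[s,u,t,v] be bihomogeneous of bidegree (m,n) with m,n ≥ 1, and let Q₁, …, Q_r be elements of Syz(a², ab, ac, ad, b², bc, bd, c², cd, d²) whose ten components are bihomogeneous of bidegree (m−1,n−1), with r = mn. For each i and each pair (j,k) with 0 ≤ j ≤ m−1, 0 ≤ k ≤ n−1, let Q_{i,jk}(x,y,z,w) be the quadratic form in ℂ[x,y,z,w] whose coefficient on each of the ten quadratic monomials x², xy, xz, xw, y², yz, yw, z², zw, w² is the coefficient of the monomial s^j u^{m−1−j} t^k v^{n−1−k} in the corresponding component of Q_i. Let M be the mn × mn matrix with rows indexed by i and columns indexed by (j,k) and entries Q_{i,jk}. Then det M lies in the kernel of the ℂ-algebra homomorphism ℂ[x,y,z,w]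 → R sending x ↦ a, y ↦ b, z ↦ c, w ↦ d. -/
open MvPolynomial

/-- The ten products `a², ab, ac, ad, b², bc, bd, c², cd, d²`. -/
noncomputable def tenProducts (a b c d : MvPolynomial (Fin 4) ℂ) :
    Fin 10 → MvPolynomial (Fin 4) ℂ :=
  ![a ^ 2, a * b, a * c, a * d, b ^ 2, b * c, b * d, c ^ 2, c * d, d ^ 2]

/-- The ten quadratic monomials `x², xy, xz, xw, y², yz, yw, z², zw, w²` in
`ℂ[x,y,z,w]` (variables `0 = x`, `1 = y`, `2 = z`, `3 = w`). -/
noncomputable def quadMonomials : Fin 10 → MvPolynomial (Fin 4) ℂ :=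
  ![X 0 ^ 2, X 0 * X 1, X 0 * X 2, X 0 * X 3, X 1 ^ 2, X 1 * X 2, X 1 * X 3,
    X 2 ^ 2, X 2 * X 3, X 3 ^ 2]

/-- The exponent of the monomial `s^j u^{m−1−j} t^k v^{n−1−k}`. -/
noncomputable def bidegExponent (m n j k : ℕ) : Fin 4 →₀ ℕ :=
  Finsupp.single 0 j + Finsupp.single 1 (m - 1 - j) +
    Finsupp.single 2 k + Finsupp.single 3 (n - 1 - k)

/-- The quadratic form `Q_{i,jk}(x,y,z,w)` obtained from a moving quadric `Qi`
(a 10-tuple of coefficients) by extracting the coefficient of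
`s^j u^{m−1−j} t^k v^{n−1−k}` from each component. -/
noncomputable def movingQuadricForm (m n : ℕ)
    (Qi : Fin 10 → MvPolynomial (Fin 4) ℂ) (j k : ℕ) : MvPolynomial (Fin 4) ℂ :=
  ∑ l : Fin 10, C (coeff (bidegExponent m n j k) (Qi l)) * quadMonomials l

/-- The `mn × mn` matrix `M = (Q_{i,jk})`, with rows indexed by `i` and columns
indexed by the pairs `(j,k)` via `finProdFinEquiv`. -/
noncomputable def movingQuadricMatrix (m n : ℕ)
    (Q : Fin (m * n) → (Fin 10 → MvPolynomial (Fin 4) ℂ)) :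
    Matrix (Fin (m * n)) (Fin (m * n)) (MvPolynomial (Fin 4) ℂ) :=
  Matrix.of fun i jk =>
    movingQuadricForm m n (Q i) ((finProdFinEquiv.symm jk).1 : ℕ)
      ((finProdFinEquiv.symm jk).2 : ℕ)

/-!
Expanding each moving quadric as `Q_i = ∑ Q_{i,jk}(x,y,z,w) s^j u^{m-1-j} t^k v^{n-1-k}`, the
syzygy condition says that once `(a,b,c,d)` is substituted for `(x,y,z,w)`, the matrix `M`
annihilates the nonzero vector of monomials `s^j u^{m-1-j} t^k v^{n-1-k}`. Since `R` is a
domain, `det M` maps to zero.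
-/

lemma bidegExponent_injective (m n : ℕ) :
    Function.Injective fun p : Fin m × Fin n => bidegExponent m n p.1 p.2 := by
  intro p q h
  have h0 := DFunLike.congr_fun h 0
  have h2 := DFunLike.congr_fun h 2
  simp [bidegExponent] at h0 h2
  exact Prod.ext (Fin.ext h0) (Fin.ext h2)

lemma support_subset_range_bidegExponent {m n : ℕ} (hm : 1 ≤ m) (hn : 1 ≤ n)
    {f : MvPolynomial (Fin 4) ℂ} (hf : IsBihomogeneous f (m - 1) (n - 1)) :
    f.support ⊆ Finset.univ.image fun p : Fin m × Fin n => bidegExponent m n p.1 p.2 := by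
  intro e he
  obtain ⟨h01, h23⟩ := hf e he
  refine Finset.mem_image.2 ⟨(⟨e 0, by omega⟩, ⟨e 2, by omega⟩), Finset.mem_univ _, ?_⟩
  ext i
  fin_cases i <;> simp [bidegExponent] <;> omega

lemma sum_monomial_bidegExponent_coeff {m n : ℕ} (hm : 1 ≤ m) (hn : 1 ≤ n)
    {f : MvPolynomial (Fin 4) ℂ} (hf : IsBihomogeneous f (m - 1) (n - 1)) :
    ∑ p : Fin m × Fin n,
      monomial (bidegExponent m n p.1 p.2) (coeff (bidegExponent m n p.1 p.2) f) = f := by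
  classical
  rw [← Finset.sum_image (f := fun e => monomial e (coeff e f))
    fun p _ q _ h => bidegExponent_injective m n h, eq_comm]
  conv_lhs => rw [as_sum f]
  refine Finset.sum_subset (support_subset_range_bidegExponent hm hn hf) fun e _ he => ?_
  rw [notMem_support_iff.mp he, map_zero]

lemma aeval_quadMonomials (a b c d : MvPolynomial (Fin 4) ℂ) (l : Fin 10) :
    aeval ![a, b, c, d] (quadMonomials l) = tenProducts a b c d l := by
  fin_cases l <;> simp [quadMonomials, tenProducts]

lemma aeval_movingQuadricForm (m n : ℕ) (a b c d : MvPolynomial (Fin 4) ℂ)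
    (Qi : Fin 10 → MvPolynomial (Fin 4) ℂ) (j k : ℕ) :
    aeval ![a, b, c, d] (movingQuadricForm m n Qi j k) =
      ∑ l, C (coeff (bidegExponent m n j k) (Qi l)) * tenProducts a b c d l := by
  simp only [movingQuadricForm, map_sum, map_mul, aeval_C, aeval_quadMonomials, algebraMap_eq]

lemma sum_aeval_movingQuadricForm_mul_monomial {m n : ℕ} (hm : 1 ≤ m) (hn : 1 ≤ n)
    (a b c d : MvPolynomial (Fin 4) ℂ) (Qi : Fin 10 → MvPolynomial (Fin 4) ℂ)
    (hQi : ∀ l, IsBihomogeneous (Qi l) (m - 1) (n - 1)) :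
    ∑ p : Fin m × Fin n, aeval ![a, b, c, d] (movingQuadricForm m n Qi p.1 p.2) *
        monomial (bidegExponent m n p.1 p.2) 1 =
      ∑ l, Qi l * tenProducts a b c d l := by
  simp only [aeval_movingQuadricForm, Finset.sum_mul]
  rw [Finset.sum_comm]
  refine Finset.sum_congr rfl fun l _ => ?_
  conv_rhs => rw [← sum_monomial_bidegExponent_coeff hm hn (hQi l), Finset.sum_mul]
  refine Finset.sum_congr rfl fun p _ => ?_
  rw [mul_right_comm, C_mul_monomial, mul_one, mul_comm]

theorem det_moving_quadrics_in_kernel_general (m n : ℕ) (hm : 1 ≤ m) (hn : 1 ≤ n)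
    (a b c d : MvPolynomial (Fin 4) ℂ)
    (Q : Fin (m * n) → (Fin 10 → MvPolynomial (Fin 4) ℂ))
    (hQdeg : ∀ i l, IsBihomogeneous (Q i l) (m - 1) (n - 1))
    (hQsyz : ∀ i, ∑ l, Q i l * tenProducts a b c d l = 0) :
    (movingQuadricMatrix m n Q).det ∈
      RingHom.ker (MvPolynomial.aeval (![a, b, c, d] : Fin 4 → MvPolynomial (Fin 4) ℂ)
        : MvPolynomial (Fin 4) ℂ →ₐ[ℂ] MvPolynomial (Fin 4) ℂ) := by
  set v : Fin m × Fin n → MvPolynomial (Fin 4) ℂ :=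
    fun p => monomial (bidegExponent m n p.1 p.2) 1
  have hv : v ∘ finProdFinEquiv.symm ≠ 0 := fun h => by
    simpa [v] using congrFun h ⟨0, Nat.mul_pos hm hn⟩
  rw [RingHom.mem_ker, ← AlgHom.coe_toRingHom, RingHom.map_det]
  refine Matrix.exists_mulVec_eq_zero_iff.mp ⟨_, hv, funext fun i => ?_⟩
  rw [Pi.zero_apply, Matrix.mulVec, dotProduct, ← hQsyz i,
    ← sum_aeval_movingQuadricForm_mul_monomial hm hn a b c d (Q i) (hQdeg i),
    ← finProdFinEquiv.sum_comp]
  simp only [RingHom.mapMatrix_apply, Matrix.map_apply, movingQuadricMatrix, Matrix.of_apply,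
    Function.comp_apply, Equiv.symm_apply_apply, AlgHom.coe_toRingHom, v]

/-- For `mn` moving quadrics of bidegree `(m−1,n−1)` following the
parametrization `(a,b,c,d)`, the determinant of the `mn × mn` matrix `M = (Q_{i,jk})`
lies in the kernel of `ℂ[x,y,z,w] → R`, `x ↦ a, y ↦ b, z ↦ c, w ↦ d`. -/
theorem det_moving_quadrics_in_kernel (m n : ℕ) (hm : 1 ≤ m) (hn : 1 ≤ n)
    (a b c d : MvPolynomial (Fin 4) ℂ)
    (ha : IsBihomogeneous a m n) (hb : IsBihomogeneous b m n)
    (hc : IsBihomogeneous c m n) (hd : IsBihomogeneous d m n)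
    (Q : Fin (m * n) → (Fin 10 → MvPolynomial (Fin 4) ℂ))
    (hQdeg : ∀ i l, IsBihomogeneous (Q i l) (m - 1) (n - 1))
    (hQsyz : ∀ i, ∑ l, Q i l * tenProducts a b c d l = 0) :
    (movingQuadricMatrix m n Q).det ∈
      RingHom.ker (MvPolynomial.aeval (![a, b, c, d] : Fin 4 → MvPolynomial (Fin 4) ℂ)
        : MvPolynomial (Fin 4) ℂ →ₐ[ℂ] MvPolynomial (Fin 4) ℂ) :=
  det_moving_quadrics_in_kernel_general m n hm hn a b c d Q hQdeg hQsyz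
end
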